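/- Let μ₀ be a commutative multiplication on A whose associator satisfies A_{μ₀}(x,y,z) = A_{μ₀}(z,y,x) for all x,y,z. For bilinear maps φ,φ' on A set D(φ,φ')(x,y,z) = φ(x,φ'(y,z)) − φ(φ'(x,y),z). Let (φ_i)_{i≥0} be an (Id−τ₁₃)-formal deformation of μ₀, i.e. φ₀ = μ₀ and for every k ≥ 0 and all x,y,z ∈ A: ∑_{i+j=k} [D(φ_i,φ_j)(x,y,z) − D(φ_i,φ_j)(z,y,x)] = 0. Then: (1) the skew-symmetric part ψ₁ of φ₁ satisfies the Jacobi identity; (2) the symmetric part ρ₁(x,y) = φ₁(x,y) + φ₁(y,x) satisfies μ₀(x,ρ₁(y,z)) − μ₀(z,ρ₁(x,y)) − ρ₁(μ₀(x,y),z) + ρ₁(x,μ₀(y,z)) = 0 for all x,y,z ∈ A. -/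

import Mathlib

open Finset

/-- The associator of a bilinear multiplication. -/
def assocMap {K A : Type*} [Field K] [AddCommGroup A] [Module K A]
    (μ : A →ₗ[K] A →ₗ[K] A) (x y z : A) : A :=
  μ x (μ y z) - μ (μ x y) z

/-- The skew-symmetric part of a bilinear multiplication. -/
def skewPart {K A : Type*} [Field K] [AddCommGroup A] [Module K A]
    (φ : A →ₗ[K] A →ₗ[K] A) (x y : A) : A :=
  φ x y - φ y x

/-- The symmetric part of a bilinear multiplication. -/
def symPart {K A : Type*} [Field K] [AddCommGroup A] [Module K A]
    (φ : A →ₗ[K] A →ₗ[K] A) (x y : A) : A :=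
  φ x y + φ y x

/-- `D(φ,φ')(x,y,z) = φ(x,φ'(y,z)) − φ(φ'(x,y),z)`. -/
def defD {K A : Type*} [Field K] [AddCommGroup A] [Module K A]
    (φ φ' : A →ₗ[K] A →ₗ[K] A) (x y z : A) : A :=
  φ x (φ' y z) - φ (φ' x y) z

/-! The order-1 deformation equation is, up to commutativity of `μ₀`, literally the stated
identity for `ρ₁`. The order-2 equation expresses the `τ₁₃`-defect of `(φ₁, φ₁)` through the
defects of `(μ₀, φ₂)` and `(φ₂, μ₀)`; the cyclic sum of the latter vanishes because `μ₀` is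
commutative, while the cyclic sum of the former is the Jacobiator of `ψ₁`. -/

theorem Finset.Nat.sum_antidiagonal_one {M : Type*} [AddCommMonoid M] (f : ℕ × ℕ → M) :
    ∑ p ∈ antidiagonal 1, f p = f (0, 1) + f (1, 0) := by
  simp [Finset.Nat.sum_antidiagonal_succ]

theorem Finset.Nat.sum_antidiagonal_two {M : Type*} [AddCommMonoid M] (f : ℕ × ℕ → M) :
    ∑ p ∈ antidiagonal 2, f p = f (0, 2) + f (1, 1) + f (2, 0) := by
  simp [Finset.Nat.sum_antidiagonal_succ, add_assoc]

section

variable {K A : Type*} [Field K] [AddCommGroup A] [Module K A]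

/-- `(Id − τ₁₃) D(φ, φ')`, the summand of the deformation equations. -/
def tauDefect (φ φ' : A →ₗ[K] A →ₗ[K] A) (x y z : A) : A :=
  defD φ φ' x y z - defD φ φ' z y x

theorem jacobiator_skewPart_eq_cyclic_sum_tauDefect (φ : A →ₗ[K] A →ₗ[K] A) (x y z : A) :
    skewPart φ x (skewPart φ y z) + skewPart φ y (skewPart φ z x) +
        skewPart φ z (skewPart φ x y) =
      tauDefect φ φ x y z + tauDefect φ φ y z x + tauDefect φ φ z x y := by
  simp only [skewPart, tauDefect, defD, map_sub, LinearMap.sub_apply]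
  abel

variable {μ : A →ₗ[K] A →ₗ[K] A}

theorem cyclic_sum_tauDefect_add_eq_zero_of_comm (hμ : ∀ x y, μ x y = μ y x)
    (φ : A →ₗ[K] A →ₗ[K] A) (x y z : A) :
    (tauDefect μ φ x y z + tauDefect φ μ x y z) + (tauDefect μ φ y z x + tauDefect φ μ y z x) +
      (tauDefect μ φ z x y + tauDefect φ μ z x y) = 0 := by
  simp only [tauDefect, defD]
  rw [hμ y x, hμ z y, hμ x z]
  linear_combination (norm := module) hμ (φ y x) z + hμ (φ z y) x + hμ (φ x z) y
      - hμ (φ x y) z - hμ (φ y z) x - hμ (φ z x) y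

theorem symPart_compat_eq_tauDefect_add_of_comm (hμ : ∀ x y, μ x y = μ y x)
    (φ : A →ₗ[K] A →ₗ[K] A) (x y z : A) :
    μ x (symPart φ y z) - μ z (symPart φ x y) - symPart φ (μ x y) z + symPart φ x (μ y z) =
      tauDefect μ φ x y z + tauDefect φ μ x y z := by
  simp only [symPart, tauDefect, defD, map_add]
  rw [hμ y x, hμ z y]
  linear_combination (norm := module) hμ (φ x y) z - hμ (φ z y) x

end

theorem tau13_deformation_general {K A : Type*} [Field K]
    [AddCommGroup A] [Module K A]
    (μ₀ : A →ₗ[K] A →ₗ[K] A)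
    (hcomm : ∀ x y : A, μ₀ x y = μ₀ y x)
    (φ : ℕ → (A →ₗ[K] A →ₗ[K] A))
    (h0 : φ 0 = μ₀)
    (hdef : ∀ k : ℕ, ∀ x y z : A,
      ∑ p ∈ Finset.HasAntidiagonal.antidiagonal k,
        (defD (φ p.1) (φ p.2) x y z - defD (φ p.1) (φ p.2) z y x) = 0) :
    (∀ x y z : A,
      skewPart (φ 1) x (skewPart (φ 1) y z) + skewPart (φ 1) y (skewPart (φ 1) z x) +
        skewPart (φ 1) z (skewPart (φ 1) x y) = 0) ∧
    (∀ x y z : A,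
      μ₀ x (symPart (φ 1) y z) - μ₀ z (symPart (φ 1) x y) -
        symPart (φ 1) (μ₀ x y) z + symPart (φ 1) x (μ₀ y z) = 0) := by
  have order_one (x y z : A) : tauDefect μ₀ (φ 1) x y z + tauDefect (φ 1) μ₀ x y z = 0 := by
    have h : ∑ p ∈ antidiagonal 1, tauDefect (φ p.1) (φ p.2) x y z = 0 := hdef 1 x y z
    rwa [Finset.Nat.sum_antidiagonal_one, h0] at h
  have order_two (x y z : A) : tauDefect (φ 1) (φ 1) x y z =
      -(tauDefect μ₀ (φ 2) x y z + tauDefect (φ 2) μ₀ x y z) := by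
    have h : ∑ p ∈ antidiagonal 2, tauDefect (φ p.1) (φ p.2) x y z = 0 := hdef 2 x y z
    rw [Finset.Nat.sum_antidiagonal_two, h0] at h
    exact eq_neg_of_add_eq_zero_left (by rw [← h]; abel)
  refine ⟨fun x y z => ?_, fun x y z => ?_⟩
  · rw [jacobiator_skewPart_eq_cyclic_sum_tauDefect, order_two, order_two, order_two]
    linear_combination (norm := module)
      -cyclic_sum_tauDefect_add_eq_zero_of_comm hcomm (φ 2) x y z
  · rw [symPart_compat_eq_tauDefect_add_of_comm hcomm, order_one]

/-- If `(φ_i)` is an `(Id − τ₁₃)`-formal deformation of a commutative `(Id − τ₁₃)`-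
multiplication `μ₀`, then the skew-symmetric part `ψ₁` of `φ₁` satisfies the Jacobi
identity, and the symmetric part `ρ₁` of `φ₁` satisfies
`μ₀(x,ρ₁(y,z)) − μ₀(z,ρ₁(x,y)) − ρ₁(μ₀(x,y),z) + ρ₁(x,μ₀(y,z)) = 0`. -/
theorem tau13_deformation {K A : Type*} [Field K] [CharZero K]
    [AddCommGroup A] [Module K A]
    (μ₀ : A →ₗ[K] A →ₗ[K] A)
    (hcomm : ∀ x y : A, μ₀ x y = μ₀ y x)
    (htau : ∀ x y z : A, assocMap μ₀ x y z = assocMap μ₀ z y x)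
    (φ : ℕ → (A →ₗ[K] A →ₗ[K] A))
    (h0 : φ 0 = μ₀)
    (hdef : ∀ k : ℕ, ∀ x y z : A,
      ∑ p ∈ Finset.HasAntidiagonal.antidiagonal k,
        (defD (φ p.1) (φ p.2) x y z - defD (φ p.1) (φ p.2) z y x) = 0) :
    (∀ x y z : A,
      skewPart (φ 1) x (skewPart (φ 1) y z) + skewPart (φ 1) y (skewPart (φ 1) z x) +
        skewPart (φ 1) z (skewPart (φ 1) x y) = 0) ∧
    (∀ x y z : A,
      μ₀ x (symPart (φ 1) y z) - μ₀ z (symPart (φ 1) x y) -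
        symPart (φ 1) (μ₀ x y) z + symPart (φ 1) x (μ₀ y z) = 0) :=
  tau13_deformation_general μ₀ hcomm φ h0 hdef
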